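/- Let G be the directed 2-cycle: vertices x, y and edges e, f with s(e) = r(f) = x and s(f) = r(e) = y. Let α be a path weight on G and ρ = ρ_α the associated right weight, and suppose the left weight λ_α is left-bounded, i.e. λ(w) := sup_v λ_α(v,w) < ∞ for all w ∈ G⁺. Then ρ is right-bounded at ef and at fe: ρ(ef) ≤ max(λ(ef), λ(fe)) < ∞ and similarly ρ(fe) < ∞. Consequently G⁺_ρ ⊇ ⟨ef, fe⟩ := {x, y} ∪ {(ef)^k, (fe)^k : k ≥ 1}. -/

import Mathlib

open scoped Classical

noncomputable section

/-- The set of all finite paths of a directed graph (quiver), including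
vertices as paths of length `0`. -/
def PathIn (V : Type u) [Quiver.{w} V] : Type (max u w) :=
  Σ a b : V, Quiver.Path a b

namespace PathIn

variable {V : Type u} [Quiver.{w} V]

/-- The source vertex `s(p)` of a path. -/
def src (p : PathIn V) : V := p.1

/-- The range vertex `r(p)` of a path. -/
def tgt (p : PathIn V) : V := p.2.1

/-- The length `|p|` of a path. -/
def length (p : PathIn V) : ℕ := p.2.2.length

/-- A vertex, regarded as a path of length `0`. -/
def ofVertex (x : V) : PathIn V := ⟨x, x, Quiver.Path.nil⟩

/-- A path which is a single edge. -/
def IsEdge (p : PathIn V) : Prop := p.length = 1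

/-- `Comp w v`: the product `wv` (first traverse `v`, then `w`) is a path,
i.e. `s(w) = r(v)`. -/
def Comp (w v : PathIn V) : Prop := w.src = v.tgt

/-- The product path `wv` (first traverse `v`, then `w`); junk value `w` if
not composable. -/
def mul (w v : PathIn V) : PathIn V :=
  if h : w.src = v.tgt then ⟨v.1, w.2.1, v.2.2.comp (w.2.2.cast h rfl)⟩ else w

end PathIn

variable {V : Type u} [Quiver.{w} V]

/-- A left weight on the path semigroupoid of `G`: nonnegative, nonzero
exactly on composable pairs, and satisfying the left cocycle condition. -/
def IsLeftWeight (l : PathIn V → PathIn V → ℝ) : Prop :=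
  (∀ v w, 0 ≤ l v w) ∧
  (∀ v w, 0 < l v w ↔ PathIn.Comp w v) ∧
  (∀ v w₁ w₂, PathIn.Comp w₁ v → PathIn.Comp w₂ w₁ →
    l v (PathIn.mul w₂ w₁) = l (PathIn.mul w₁ v) w₂ * l v w₁)

/-- A right weight on the path semigroupoid of `G`. -/
def IsRightWeight (r : PathIn V → PathIn V → ℝ) : Prop :=
  (∀ v u, 0 ≤ r v u) ∧
  (∀ v u, 0 < r v u ↔ PathIn.Comp v u) ∧
  (∀ v u₁ u₂, PathIn.Comp v u₁ → PathIn.Comp u₁ u₂ →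
    r v (PathIn.mul u₁ u₂) = r (PathIn.mul v u₁) u₂ * r v u₁)

/-- A path weight: strictly positive, equal to `1` on vertices. -/
def IsPathWeight (α : PathIn V → ℝ) : Prop :=
  (∀ p, 0 < α p) ∧ (∀ x : V, α (PathIn.ofVertex x) = 1)

/-- The left weight `λ_α` associated with a path weight `α`. -/
def leftOf (α : PathIn V → ℝ) (v w : PathIn V) : ℝ :=
  if PathIn.Comp w v then α (PathIn.mul w v) / α v else 0

/-- The right weight `ρ_α` associated with a path weight `α`. -/
def rightOf (α : PathIn V → ℝ) (v u : PathIn V) : ℝ :=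
  if PathIn.Comp v u then α (PathIn.mul v u) / α v else 0

/-- The path weight `α_λ` associated with a left weight: `α_λ(v) = λ(s(v),v)`. -/
def pwOf (l : PathIn V → PathIn V → ℝ) (v : PathIn V) : ℝ :=
  l (PathIn.ofVertex v.src) v

/-- `λ` is left-bounded at `w`, i.e. `λ(w) = sup_v λ(v,w) < ∞`. -/
def LeftBddAt (l : PathIn V → PathIn V → ℝ) (w : PathIn V) : Prop :=
  BddAbove (Set.range fun v => l v w)

/-- `λ` is left-bounded. -/
def LeftBdd (l : PathIn V → PathIn V → ℝ) : Prop := ∀ w, LeftBddAt l w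

/-- `ρ` is right-bounded at `u`, i.e. `ρ(u) = sup_v ρ(v,u) < ∞`. -/
def RightBddAt (r : PathIn V → PathIn V → ℝ) (u : PathIn V) : Prop :=
  BddAbove (Set.range fun v => r v u)

/-- `ρ` is right-bounded. -/
def RightBdd (r : PathIn V → PathIn V → ℝ) : Prop := ∀ u, RightBddAt r u

/-- `ρ` is a right companion to `λ`: it is a right weight and the pair
`(λ, ρ)` satisfies the commuting square condition at every `(w, u)`. -/
def IsRightCompanion (l r : PathIn V → PathIn V → ℝ) : Prop :=
  IsRightWeight r ∧
  ∀ w u v, PathIn.Comp w v → PathIn.Comp v u →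
    r (PathIn.mul w v) u * l v w = l (PathIn.mul v u) w * r v u

/-- The Fock space `H_G = ℓ²(G⁺)` of the graph. -/
abbrev FockSpace (V : Type u) [Quiver.{w} V] : Type _ := lp (fun _ : PathIn V => ℂ) 2

/-- The canonical orthonormal basis vector `ξ_v` of the Fock space. -/
def xi (v : PathIn V) : FockSpace V := lp.single 2 v 1

end

/-- The two vertices of the directed 2-cycle. -/
inductive TwoV : Type
  | vx : TwoV
  | vy : TwoV
deriving DecidableEq

/-- The directed 2-cycle: one edge in each direction between the two
vertices. -/
instance : Quiver.{0} TwoV := ⟨fun a b => PLift (a ≠ b)⟩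

/-- The edge `e`, with `s(e) = x` and `r(e) = y`. -/
def edgeE : TwoV.vx ⟶ TwoV.vy := PLift.up (by decide)

/-- The edge `f`, with `s(f) = y` and `r(f) = x`. -/
def edgeF : TwoV.vy ⟶ TwoV.vx := PLift.up (by decide)

/-- The path `ef` (first `f`, then `e`), a loop at `y`. -/
def efPath : Quiver.Path TwoV.vy TwoV.vy := (Quiver.Path.nil.cons edgeF).cons edgeE

/-- The path `fe` (first `e`, then `f`), a loop at `x`. -/
def fePath : Quiver.Path TwoV.vx TwoV.vx := (Quiver.Path.nil.cons edgeE).cons edgeF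

/-- The path `(ef)^k`. -/
def efPow : ℕ → Quiver.Path TwoV.vy TwoV.vy
  | 0 => Quiver.Path.nil
  | k + 1 => (efPow k).comp efPath

/-- The path `(fe)^k`. -/
def fePow : ℕ → Quiver.Path TwoV.vx TwoV.vx
  | 0 => Quiver.Path.nil
  | k + 1 => (fePow k).comp fePath

/-- `(ef)^k` as an element of the path semigroupoid. -/
def EF (k : ℕ) : PathIn TwoV := ⟨TwoV.vy, TwoV.vy, efPow k⟩

/-- `(fe)^k` as an element of the path semigroupoid. -/
def FE (k : ℕ) : PathIn TwoV := ⟨TwoV.vx, TwoV.vx, fePow k⟩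

section TwoCycleAux

instance : Nonempty (PathIn TwoV) := ⟨PathIn.ofVertex TwoV.vx⟩

instance {a b : TwoV} : Subsingleton (a ⟶ b) :=
  ⟨fun e e' => by change PLift (a ≠ b) at e e'; cases e; cases e'; rfl⟩

lemma twoV_cases (a : TwoV) : a = TwoV.vx ∨ a = TwoV.vy := by cases a <;> simp

lemma hom_tgt {a b c : TwoV} (e : a ⟶ b) (e' : a ⟶ c) : b = c := by
  have h1 : a ≠ b := e.down
  have h2 : a ≠ c := e'.down
  cases a <;> cases b <;> cases c <;> simp_all

lemma path_unique : ∀ (n : ℕ) {a b c : TwoV} (p : Quiver.Path a b) (q : Quiver.Path a c),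
    p.length = n → q.length = n → (⟨a, b, p⟩ : PathIn TwoV) = ⟨a, c, q⟩ := by
  intro n
  induction n with
  | zero =>
    intro a b c p q hp hq
    cases p with
    | nil =>
      cases q with
      | nil => rfl
      | cons q e => simp [Quiver.Path.length] at hq
    | cons p e => simp [Quiver.Path.length] at hp
  | succ n ih =>
    intro a b c p q hp hq
    cases p with
    | nil => simp [Quiver.Path.length] at hp
    | cons p e =>
      cases q with
      | nil => simp [Quiver.Path.length] at hq
      | cons q e' =>
        rename_i b₁ c₁
        have hp' : p.length = n := by simpa [Quiver.Path.length] using hp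
        have hq' : q.length = n := by simpa [Quiver.Path.length] using hq
        have key := ih p q hp' hq'
        have h1 : b₁ = c₁ := congrArg PathIn.tgt key
        subst h1
        have h2 : p = q := by
          injection key with k1 k2
          injection k2 with k3 k4
        subst h2
        have h3 : b = c := hom_tgt e e'
        subst h3
        rw [Subsingleton.elim e e']

lemma pathIn_eq (p q : PathIn TwoV) (h1 : p.src = q.src) (h2 : p.length = q.length) :
    p = q := by
  obtain ⟨a, b, p⟩ := p
  obtain ⟨a', c, q⟩ := q
  have ha : a = a' := h1
  subst ha
  exact path_unique _ p q rfl h2.symm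

lemma mul_def (w v : PathIn TwoV) (h : PathIn.Comp w v) :
    PathIn.mul w v = ⟨v.1, w.2.1, v.2.2.comp (w.2.2.cast h rfl)⟩ := dif_pos h

lemma src_mul (w v : PathIn TwoV) (h : PathIn.Comp w v) :
    (PathIn.mul w v).src = v.src := by rw [mul_def w v h]; rfl

lemma length_cast {a b a' b' : TwoV} (ha : a = a') (hb : b = b') (p : Quiver.Path a b) :
    (p.cast ha hb).length = p.length := by
  subst ha; subst hb; rw [Quiver.Path.cast_rfl_rfl]

lemma length_mul (w v : PathIn TwoV) (h : PathIn.Comp w v) :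
    (PathIn.mul w v).length = w.length + v.length := by
  rw [mul_def w v h]
  show (v.2.2.comp (w.2.2.cast h rfl)).length = _
  rw [Quiver.Path.length_comp]; refine (congrArg (v.2.2.length + ·) (length_cast h rfl w.2.2)).trans ?_
  exact Nat.add_comm _ _

/-- The loop of length `2*k` based at a given vertex. -/
def loop : TwoV → ℕ → PathIn TwoV
  | TwoV.vx, k => FE k
  | TwoV.vy, k => EF k

lemma efPow_length (k : ℕ) : (efPow k).length = 2 * k := by
  induction k with
  | zero => rfl
  | succ k ih =>
    show ((efPow k).comp efPath).length = _
    rw [Quiver.Path.length_comp, ih]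
    have h2 : efPath.length = 2 := rfl
    omega

lemma fePow_length (k : ℕ) : (fePow k).length = 2 * k := by
  induction k with
  | zero => rfl
  | succ k ih =>
    show ((fePow k).comp fePath).length = _
    rw [Quiver.Path.length_comp, ih]
    have h2 : fePath.length = 2 := rfl
    omega

lemma loop_src (a : TwoV) (k : ℕ) : (loop a k).src = a := by cases a <;> rfl

lemma loop_tgt (a : TwoV) (k : ℕ) : (loop a k).tgt = a := by cases a <;> rfl

lemma loop_length (a : TwoV) (k : ℕ) : (loop a k).length = 2 * k := by
  cases a
  · exact fePow_length k
  · exact efPow_length k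

lemma leftOf_nonneg {α : PathIn TwoV → ℝ} (hα : IsPathWeight α) (v w : PathIn TwoV) :
    0 ≤ leftOf α v w := by
  rw [leftOf]
  split
  · exact le_of_lt (div_pos (hα.1 _) (hα.1 _))
  · exact le_refl 0

lemma rightOf_nonneg {α : PathIn TwoV → ℝ} (hα : IsPathWeight α) (v u : PathIn TwoV) :
    0 ≤ rightOf α v u := by
  rw [rightOf]
  split
  · exact le_of_lt (div_pos (hα.1 _) (hα.1 _))
  · exact le_refl 0

lemma rho_two_le {α : PathIn TwoV → ℝ} (hα : IsPathWeight α) (u v : PathIn TwoV)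
    (h2 : u.length = 2) (hst : u.src = u.tgt) :
    rightOf α v u ≤ max (leftOf α v (EF 1)) (leftOf α v (FE 1)) := by
  by_cases h : PathIn.Comp v u
  · rcases twoV_cases v.tgt with hb | hb
    · have hc : PathIn.Comp (FE 1) v := by show (FE 1).src = v.tgt; rw [hb]; rfl
      have hmul : PathIn.mul v u = PathIn.mul (FE 1) v := by
        apply pathIn_eq
        · rw [src_mul _ _ h, src_mul _ _ hc, hst]
          exact h.symm
        · rw [length_mul _ _ h, length_mul _ _ hc, h2]
          have hfe : (FE 1).length = 2 := rfl
          omega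
      have heq : rightOf α v u = leftOf α v (FE 1) := by
        rw [rightOf, leftOf, if_pos h, if_pos hc, hmul]
      rw [heq]; exact le_max_right _ _
    · have hc : PathIn.Comp (EF 1) v := by show (EF 1).src = v.tgt; rw [hb]; rfl
      have hmul : PathIn.mul v u = PathIn.mul (EF 1) v := by
        apply pathIn_eq
        · rw [src_mul _ _ h, src_mul _ _ hc, hst]
          exact h.symm
        · rw [length_mul _ _ h, length_mul _ _ hc, h2]
          have hef : (EF 1).length = 2 := rfl
          omega
      have heq : rightOf α v u = leftOf α v (EF 1) := by
        rw [rightOf, leftOf, if_pos h, if_pos hc, hmul]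
      rw [heq]; exact le_max_left _ _
  · rw [rightOf, if_neg h]
    exact le_trans (leftOf_nonneg hα v (EF 1)) (le_max_left _ _)

lemma rho_two_le_sup {α : PathIn TwoV → ℝ} (hα : IsPathWeight α)
    (hlb : LeftBdd (leftOf α)) (u v : PathIn TwoV)
    (h2 : u.length = 2) (hst : u.src = u.tgt) :
    rightOf α v u ≤ max (⨆ v, leftOf α v (EF 1)) (⨆ v, leftOf α v (FE 1)) := by
  refine le_trans (rho_two_le hα u v h2 hst) (max_le_max ?_ ?_)
  · exact le_ciSup (hlb (EF 1)) v
  · exact le_ciSup (hlb (FE 1)) v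

lemma rho_pow_le {α : PathIn TwoV → ℝ} (hα : IsPathWeight α)
    (hlb : LeftBdd (leftOf α)) :
    ∀ (k : ℕ) (u : PathIn TwoV), u.length = 2 * k → u.src = u.tgt → ∀ v,
      rightOf α v u ≤
        (max (max (⨆ v, leftOf α v (EF 1)) (⨆ v, leftOf α v (FE 1))) 1) ^ k := by
  intro k
  induction k with
  | zero =>
    intro u hlen hst v
    rw [pow_zero]
    by_cases h : PathIn.Comp v u
    · have hmul : PathIn.mul v u = v := by
        apply pathIn_eq
        · rw [src_mul _ _ h, hst]
          exact h.symm
        · rw [length_mul _ _ h]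
          omega
      rw [rightOf, if_pos h, hmul, div_self (ne_of_gt (hα.1 v))]
    · rw [rightOf, if_neg h]; exact zero_le_one
  | succ k ih =>
    intro u hlen hst v
    set C : ℝ := max (max (⨆ v, leftOf α v (EF 1)) (⨆ v, leftOf α v (FE 1))) 1 with hC
    by_cases h : PathIn.Comp v u
    · have hvu' : PathIn.Comp v (loop u.src k) := by
        show v.src = (loop u.src k).tgt
        rw [loop_tgt, hst]
        exact h
      have hwu0 : PathIn.Comp (PathIn.mul v (loop u.src k)) (loop u.src 1) := by
        show (PathIn.mul v (loop u.src k)).src = (loop u.src 1).tgt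
        rw [src_mul _ _ hvu', loop_src, loop_tgt]
      have hmm : PathIn.mul (PathIn.mul v (loop u.src k)) (loop u.src 1) = PathIn.mul v u := by
        apply pathIn_eq
        · rw [src_mul _ _ hwu0, src_mul _ _ h, loop_src]
        · rw [length_mul _ _ hwu0, length_mul _ _ h, length_mul _ _ hvu',
            loop_length, loop_length, hlen]
          omega
      have hbv := (hα.1 v).ne'
      have hbw := (hα.1 (PathIn.mul v (loop u.src k))).ne'
      have heq : rightOf α v u =
          rightOf α (PathIn.mul v (loop u.src k)) (loop u.src 1) *
            rightOf α v (loop u.src k) := by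
        rw [rightOf, rightOf, rightOf, if_pos h, if_pos hwu0, if_pos hvu', hmm]
        rw [div_mul_div_comm]
        rw [mul_comm (α (PathIn.mul v (loop u.src k))) (α v)]
        rw [mul_div_mul_right _ _ hbw]
      rw [heq, pow_succ]
      have h1 : rightOf α (PathIn.mul v (loop u.src k)) (loop u.src 1) ≤ C := by
        refine le_trans (rho_two_le_sup hα hlb _ _ ?_ ?_) (le_max_left _ _)
        · rw [loop_length]
        · rw [loop_src, loop_tgt]
      have h2 : rightOf α v (loop u.src k) ≤ C ^ k :=
        ih (loop u.src k) (loop_length _ _) (by rw [loop_src, loop_tgt]) v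
      calc rightOf α (PathIn.mul v (loop u.src k)) (loop u.src 1) *
            rightOf α v (loop u.src k)
          ≤ C * C ^ k := by
            apply mul_le_mul h1 h2 (rightOf_nonneg hα _ _)
            exact le_trans zero_le_one (le_max_right _ _)
        _ = C ^ k * C := mul_comm _ _
    · rw [rightOf, if_neg h]
      positivity
end TwoCycleAux

/-- on the directed 2-cycle, if `λ_α` is left-bounded then
`ρ_α` is right-bounded at `ef` and `fe`, with `ρ(ef) ≤ max(λ(ef), λ(fe))`
(and similarly for `fe`); consequently `G⁺_ρ ⊇ ⟨ef, fe⟩`. -/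


theorem two_cycle_companion_bounded_on_even_part
    (α : PathIn TwoV → ℝ) (hα : IsPathWeight α)
    (hlb : LeftBdd (leftOf α)) :
    RightBddAt (rightOf α) (EF 1) ∧
    (⨆ v, rightOf α v (EF 1)) ≤
      max (⨆ v, leftOf α v (EF 1)) (⨆ v, leftOf α v (FE 1)) ∧
    RightBddAt (rightOf α) (FE 1) ∧
    (⨆ v, rightOf α v (FE 1)) ≤
      max (⨆ v, leftOf α v (EF 1)) (⨆ v, leftOf α v (FE 1)) ∧
    (∀ u : PathIn TwoV,
      (u = PathIn.ofVertex TwoV.vx ∨ u = PathIn.ofVertex TwoV.vy ∨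
        (∃ k, 1 ≤ k ∧ u = EF k) ∨ (∃ k, 1 ≤ k ∧ u = FE k)) →
      RightBddAt (rightOf α) u) := by
  have hefl : (EF 1).length = 2 := rfl
  have hfel : (FE 1).length = 2 := rfl
  have hbd : ∀ v, rightOf α v (EF 1) ≤
      max (⨆ v, leftOf α v (EF 1)) (⨆ v, leftOf α v (FE 1)) :=
    fun v => rho_two_le_sup hα hlb (EF 1) v hefl rfl
  have hbd' : ∀ v, rightOf α v (FE 1) ≤
      max (⨆ v, leftOf α v (EF 1)) (⨆ v, leftOf α v (FE 1)) :=
    fun v => rho_two_le_sup hα hlb (FE 1) v hfel rfl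
  refine ⟨⟨max (⨆ v, leftOf α v (EF 1)) (⨆ v, leftOf α v (FE 1)), ?_⟩, ciSup_le hbd,
    ⟨max (⨆ v, leftOf α v (EF 1)) (⨆ v, leftOf α v (FE 1)), ?_⟩, ciSup_le hbd', ?_⟩
  · rintro x ⟨v, rfl⟩; exact hbd v
  · rintro x ⟨v, rfl⟩; exact hbd' v
  · intro u hu
    have key := rho_pow_le hα hlb
    rcases hu with rfl | rfl | ⟨k, hk, rfl⟩ | ⟨k, hk, rfl⟩
    · exact ⟨(max (max (⨆ v, leftOf α v (EF 1)) (⨆ v, leftOf α v (FE 1))) 1) ^ 0,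
        by rintro x ⟨v, rfl⟩; exact key 0 (PathIn.ofVertex TwoV.vx) rfl rfl v⟩
    · exact ⟨(max (max (⨆ v, leftOf α v (EF 1)) (⨆ v, leftOf α v (FE 1))) 1) ^ 0,
        by rintro x ⟨v, rfl⟩; exact key 0 (PathIn.ofVertex TwoV.vy) rfl rfl v⟩
    · exact ⟨(max (max (⨆ v, leftOf α v (EF 1)) (⨆ v, leftOf α v (FE 1))) 1) ^ k,
        by rintro x ⟨v, rfl⟩; exact key k (EF k) (efPow_length k) rfl v⟩
    · exact ⟨(max (max (⨆ v, leftOf α v (EF 1)) (⨆ v, leftOf α v (FE 1))) 1) ^ k,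
        by rintro x ⟨v, rfl⟩; exact key k (FE k) (fePow_length k) rfl v⟩
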